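/- arXiv:1409.3804 — 8 statements merged into one kernel-verified Lean document; each statement's English description precedes it below -/
import Mathlib

section
/- Let S be a monad on Set and suppose there exist a set X and distinct elements x ≠ x' in X with η_X(x) = η_X(x'). Then for every set Y, the set SY has at most one element. -/
/-- A functor on the category of sets. -/
structure SetFunctor where
  obj : Type → Type
  map : ∀ {X Y : Type}, (X → Y) → obj X → obj Y
  map_id : ∀ (X : Type), map (id : X → X) = id
  map_comp : ∀ {X Y Z : Type} (f : X → Y) (g : Y → Z), map (g ∘ f) = map g ∘ map f

/-- A monad on the category of sets. -/
structure SetMonad extends SetFunctor where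
  unit : ∀ (X : Type), X → obj X
  mult : ∀ (X : Type), obj (obj X) → obj X
  unit_natural : ∀ {X Y : Type} (f : X → Y) (x : X), map f (unit X x) = unit Y (f x)
  mult_natural : ∀ {X Y : Type} (f : X → Y) (p : obj (obj X)),
      map f (mult X p) = mult Y (map (map f) p)
  left_unit : ∀ (X : Type) (p : obj X), mult X (unit (obj X) p) = p
  right_unit : ∀ (X : Type) (p : obj X), mult X (map (unit X) p) = p
  assoc : ∀ (X : Type) (p : obj (obj (obj X))),
      mult X (mult (obj X) p) = mult X (map (mult X) p)

namespace SetMonad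

variable (S : SetMonad)

theorem unit_obj_injective (Y : Type) : Function.Injective (S.unit (S.obj Y)) :=
  Function.LeftInverse.injective (S.left_unit Y)

theorem unit_comp_eq_of_unit_eq {X Z : Type} {x x' : X} (h : S.unit X x = S.unit X x')
    (f : X → Z) : S.unit Z (f x) = S.unit Z (f x') := by
  rw [← S.unit_natural, h, S.unit_natural]

end SetMonad

/-- If the unit of a monad on Set fails to be injective at some set `X`,
then `S Y` has at most one element for every set `Y`. -/
theorem setMonad_unit_not_injective_subsingleton (S : SetMonad) (X : Type) (x x' : X)
    (hxx : x ≠ x') (h : S.unit X x = S.unit X x') (Y : Type) (p q : S.obj Y) : p = q := by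
  classical
  have key := S.unit_comp_eq_of_unit_eq h (Function.update (fun _ => q) x p)
  rw [Function.update_self, Function.update_of_ne hxx.symm] at key
  exact S.unit_obj_injective Y key
end

section
/- Let S be a monad on Set with injective unit (i.e., η_X is injective for every set X). For any injection m : X → Y and any p ∈ SX, if Sm(p) is in the range of η_Y, then p is in the range of η_X. Consequently X ↦ SX \ range(η_X) defines a functor on the category of sets and injections. -/
/-!
A monad on Set preserves injections: for an injection `m : X → Y` (with `S X` inhabited),
extend `η_X` along `m` to `g : Y → S X`; then `μ_X ∘ S g` is a left inverse of `S m`.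
If `S m p = η_Y y`, compare the characteristic map of `range m` with the constant map `True`:
they agree after `m`, so their images of `η_Y y` agree, and injectivity of `η_Prop` forces
`y ∈ range m`, say `y = m x`. Then `S m p = S m (η_X x)`, so `p = η_X x`.
-/

open Function

lemma SetFunctor.map_map (F : SetFunctor) {X Y Z : Type} (f : X → Y) (g : Y → Z) (p : F.obj X) :
    F.map g (F.map f p) = F.map (g ∘ f) p := by
  rw [F.map_comp, comp_apply]

namespace SetMonad

variable (S : SetMonad) {X Y : Type}

theorem map_injective {m : X → Y} (hm : Injective m) : Injective (S.map m) := by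
  intro p q hpq
  obtain ⟨p₀⟩ : Nonempty (S.obj X) := ⟨p⟩
  have hextend : extend m (S.unit X) (fun _ => p₀) ∘ m = S.unit X := extend_comp hm _ _
  have hretract : ∀ r, S.mult X (S.map (extend m (S.unit X) fun _ => p₀) (S.map m r)) = r :=
    fun r => by rw [S.map_map, hextend, S.right_unit]
  rw [← hretract p, hpq, hretract q]

theorem mem_range_of_map_eq_unit (hcons : ∀ X : Type, Injective (S.unit X)) (m : X → Y)
    {p : S.obj X} {y : Y} (hp : S.map m p = S.unit Y y) : y ∈ Set.range m := by
  have hagree : (fun z => z ∈ Set.range m) ∘ m = (fun _ => True) ∘ m :=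
    funext fun x => eq_true (Set.mem_range_self x)
  have himage :
      S.map (fun z => z ∈ Set.range m) (S.map m p) = S.map (fun _ => True) (S.map m p) := by
    rw [S.map_map, S.map_map, hagree]
  rw [hp, S.unit_natural, S.unit_natural] at himage
  exact of_eq_true (hcons Prop himage)

theorem mem_range_unit_of_map_mem_range_unit (hcons : ∀ X : Type, Injective (S.unit X))
    {m : X → Y} (hm : Injective m) {p : S.obj X} (hp : S.map m p ∈ Set.range (S.unit Y)) :
    p ∈ Set.range (S.unit X) := by
  obtain ⟨y, hy⟩ := hp
  obtain ⟨x, rfl⟩ := S.mem_range_of_map_eq_unit hcons m hy.symm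
  exact ⟨x, S.map_injective hm (by rw [S.unit_natural, hy])⟩

end SetMonad

/-- For a consistent monad `S` on Set (unit componentwise injective) and an injection
`m : X → Y`: if `S m p` lies in the range of the unit, so does `p`.  Consequently
`X ↦ S X \ range (η_X)` is functorial on sets and injections:  `S m` maps the unit
complement of `X` injectively into the unit complement of `Y`. -/
theorem unit_complement_functor (S : SetMonad)
    (hcons : ∀ X : Type, Function.Injective (S.unit X))
    (X Y : Type) (m : X → Y) (hm : Function.Injective m) :
    (∀ p : S.obj X, S.map m p ∈ Set.range (S.unit Y) → p ∈ Set.range (S.unit X)) ∧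
    Set.MapsTo (S.map m) {p | p ∉ Set.range (S.unit X)} {q | q ∉ Set.range (S.unit Y)} ∧
    Set.InjOn (S.map m) {p | p ∉ Set.range (S.unit X)} := by
  refine ⟨fun p => S.mem_range_unit_of_map_mem_range_unit hcons hm, ?_, ?_⟩
  · exact fun p hp hmp => hp (S.mem_range_unit_of_map_mem_range_unit hcons hm hmp)
  · exact (S.map_injective hm).injOn
end

section
/- Let S be a consistent monad on Set and λ a regular cardinal. If the underlying functor S preserves λ-filtered colimits, then its unit complement S̄ (as a functor on the category of sets and injections) preserves λ-filtered colimits of diagrams of injections. -/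
open CategoryTheory

/-- A category is `lam`-filtered if every family of fewer than `lam` objects admits a
cocone object, and every family of fewer than `lam` parallel morphisms can be
coequalized by some morphism. -/
def IsCardinalFiltered (J : Type) [Category J] (lam : Cardinal) : Prop :=
  (∀ (K : Type) (o : K → J), Cardinal.mk K < lam → ∃ c : J, ∀ k, Nonempty (o k ⟶ c)) ∧
  (∀ (a b : J) (K : Type) (h : K → (a ⟶ b)), Cardinal.mk K < lam →
    ∃ (c : J) (g : b ⟶ c), ∀ k k' : K, h k ≫ g = h k' ≫ g)

/-! By naturality of the unit, `S.map (ℓ i) x = p` with `p ∉ range η` forces `x ∉ range η`, so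
a lift of `p` through a colimit cocone for `S` is already a lift for `S̄`. The only other point is
that the hypothesis and the conclusion quantify over indexing categories with homs in different
universes: as the colimit legs are injective, a diagram factors through the thin reflection of its
indexing category, which can be taken in any universe. -/

universe v w

/-- `J` with one morphism `i ⟶ j` whenever `J` has some. Unlike `ThinSkeleton`, no objects are
identified, and the homs may live in any universe. -/
structure Thin (J : Type) where
  obj : J

namespace Thin

variable {J : Type} [Category.{v} J]

instance category : Category.{w} (Thin J) where
  Hom i j := ULift (PLift (Nonempty (i.obj ⟶ j.obj)))
  id i := ⟨⟨⟨𝟙 i.obj⟩⟩⟩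
  comp f g := ⟨⟨⟨Classical.choice f.down.down ≫ Classical.choice g.down.down⟩⟩⟩

instance {i j : Thin J} : Subsingleton (i ⟶ j) :=
  ⟨fun ⟨⟨_⟩⟩ ⟨⟨_⟩⟩ => rfl⟩

noncomputable def homOf {i j : Thin J} (f : i ⟶ j) : i.obj ⟶ j.obj :=
  Classical.choice f.down.down

theorem isCardinalFiltered {lam : Cardinal} (hJ : IsCardinalFiltered J lam) :
    IsCardinalFiltered (Thin J) lam := by
  refine ⟨fun K o hK => ?_, fun _ b _ _ _ => ⟨b, 𝟙 b, fun _ _ => Subsingleton.elim _ _⟩⟩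
  obtain ⟨c, hc⟩ := hJ.1 K (fun k => (o k).obj) hK
  exact ⟨⟨c⟩, fun k => ⟨⟨⟨hc k⟩⟩⟩⟩

end Thin

namespace SetFunctor

def PreservesFilteredInjColimits (F : SetFunctor) (lam : Cardinal) : Prop :=
  ∀ (J : Type) [Category.{v} J], IsCardinalFiltered J lam →
    ∀ (Dobj : J → Type) (Dmap : ∀ {i j : J}, (i ⟶ j) → Dobj i → Dobj j),
      (∀ (i : J) (x : Dobj i), Dmap (𝟙 i) x = x) →
      (∀ {i j k : J} (u : i ⟶ j) (v : j ⟶ k) (x : Dobj i),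
        Dmap (u ≫ v) x = Dmap v (Dmap u x)) →
      (∀ {i j : J} (u : i ⟶ j), Function.Injective (Dmap u)) →
      ∀ (V : Type) (ℓ : ∀ i : J, Dobj i → V),
        (∀ {i j : J} (u : i ⟶ j) (x : Dobj i), ℓ j (Dmap u x) = ℓ i x) →
        (∀ i : J, Function.Injective (ℓ i)) →
        (∀ v : V, ∃ (i : J) (x : Dobj i), ℓ i x = v) →
        ∀ p : F.obj V, ∃ (i : J) (x : F.obj (Dobj i)), F.map (ℓ i) x = p

theorem PreservesFilteredInjColimits.of_hom_universe {F : SetFunctor} {lam : Cardinal}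
    (hF : PreservesFilteredInjColimits.{v} F lam) : PreservesFilteredInjColimits.{w} F lam := by
  intro J _ hJ Dobj Dmap hid hcomp hinj V ℓ hnat hℓ hsurj p
  have map_eq : ∀ {i j : J} (u u' : i ⟶ j) (x : Dobj i), Dmap u x = Dmap u' x :=
    fun u u' x => hℓ _ (by rw [hnat u, hnat u'])
  obtain ⟨i, x, hx⟩ := hF (Thin J) (Thin.isCardinalFiltered hJ) (fun i => Dobj i.obj)
    (fun f => Dmap (Thin.homOf f))
    (fun i x => by rw [map_eq _ (𝟙 i.obj), hid])
    (fun u v x => by rw [map_eq _ (Thin.homOf u ≫ Thin.homOf v), hcomp])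
    (fun _ => hinj _) V (fun i => ℓ i.obj) (fun _ x => hnat _ x) (fun i => hℓ i.obj)
    (fun v => let ⟨i, x, hx⟩ := hsurj v; ⟨⟨i⟩, x, hx⟩) p
  exact ⟨i.obj, x, hx⟩

end SetFunctor

theorem SetMonad.notMem_range_unit_of_map (S : SetMonad) {X Y : Type} (f : X → Y)
    {x : S.obj X} (hx : S.map f x ∉ Set.range (S.unit Y)) : x ∉ Set.range (S.unit X) := by
  rintro ⟨y, rfl⟩
  exact hx ⟨f y, (S.unit_natural f y).symm⟩

theorem unit_complement_accessible_general (S : SetMonad)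
    (lam : Cardinal)
    (hacc : ∀ (J : Type) [Category J], IsCardinalFiltered J lam →
      ∀ (Dobj : J → Type) (Dmap : ∀ {i j : J}, (i ⟶ j) → Dobj i → Dobj j),
        (∀ (i : J) (x : Dobj i), Dmap (𝟙 i) x = x) →
        (∀ {i j k : J} (u : i ⟶ j) (v : j ⟶ k) (x : Dobj i),
          Dmap (u ≫ v) x = Dmap v (Dmap u x)) →
        (∀ {i j : J} (u : i ⟶ j), Function.Injective (Dmap u)) →
        ∀ (V : Type) (ℓ : ∀ i : J, Dobj i → V),
          (∀ {i j : J} (u : i ⟶ j) (x : Dobj i), ℓ j (Dmap u x) = ℓ i x) →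
          (∀ i : J, Function.Injective (ℓ i)) →
          (∀ v : V, ∃ (i : J) (x : Dobj i), ℓ i x = v) →
          ∀ p : S.obj V, ∃ (i : J) (x : S.obj (Dobj i)), S.map (ℓ i) x = p) :
    ∀ (J : Type) [Category J], IsCardinalFiltered J lam →
      ∀ (Dobj : J → Type) (Dmap : ∀ {i j : J}, (i ⟶ j) → Dobj i → Dobj j),
        (∀ (i : J) (x : Dobj i), Dmap (𝟙 i) x = x) →
        (∀ {i j k : J} (u : i ⟶ j) (v : j ⟶ k) (x : Dobj i),
          Dmap (u ≫ v) x = Dmap v (Dmap u x)) →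
        (∀ {i j : J} (u : i ⟶ j), Function.Injective (Dmap u)) →
        ∀ (V : Type) (ℓ : ∀ i : J, Dobj i → V),
          (∀ {i j : J} (u : i ⟶ j) (x : Dobj i), ℓ j (Dmap u x) = ℓ i x) →
          (∀ i : J, Function.Injective (ℓ i)) →
          (∀ v : V, ∃ (i : J) (x : Dobj i), ℓ i x = v) →
          ∀ p : S.obj V, p ∉ Set.range (S.unit V) →
            ∃ (i : J) (x : S.obj (Dobj i)),
              x ∉ Set.range (S.unit (Dobj i)) ∧ S.map (ℓ i) x = p := by
  intro J _ hJ Dobj Dmap hid hcomp hinj V ℓ hnat hℓ hsurj p hp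
  have hS : S.PreservesFilteredInjColimits lam := hacc
  obtain ⟨i, x, rfl⟩ :=
    hS.of_hom_universe J hJ Dobj Dmap hid hcomp hinj V ℓ hnat hℓ hsurj p
  exact ⟨i, x, S.notMem_range_unit_of_map (ℓ i) hp, rfl⟩

/-- If a consistent monad `S` on Set preserves `lam`-filtered colimits (of diagrams of
injections, where a colimit cocone of injections is witnessed by joint surjectivity),
then so does its unit complement `S̄ X = S X \ range η_X`, as a functor on sets
and injections. -/
theorem unit_complement_accessible (S : SetMonad)
    (hcons : ∀ X : Type, Function.Injective (S.unit X))
    (lam : Cardinal) (hreg : lam.IsRegular)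
    (hacc : ∀ (J : Type) [Category J], IsCardinalFiltered J lam →
      ∀ (Dobj : J → Type) (Dmap : ∀ {i j : J}, (i ⟶ j) → Dobj i → Dobj j),
        (∀ (i : J) (x : Dobj i), Dmap (𝟙 i) x = x) →
        (∀ {i j k : J} (u : i ⟶ j) (v : j ⟶ k) (x : Dobj i),
          Dmap (u ≫ v) x = Dmap v (Dmap u x)) →
        (∀ {i j : J} (u : i ⟶ j), Function.Injective (Dmap u)) →
        ∀ (V : Type) (ℓ : ∀ i : J, Dobj i → V),
          (∀ {i j : J} (u : i ⟶ j) (x : Dobj i), ℓ j (Dmap u x) = ℓ i x) →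
          (∀ i : J, Function.Injective (ℓ i)) →
          (∀ v : V, ∃ (i : J) (x : Dobj i), ℓ i x = v) →
          ∀ p : S.obj V, ∃ (i : J) (x : S.obj (Dobj i)), S.map (ℓ i) x = p) :
    ∀ (J : Type) [Category J], IsCardinalFiltered J lam →
      ∀ (Dobj : J → Type) (Dmap : ∀ {i j : J}, (i ⟶ j) → Dobj i → Dobj j),
        (∀ (i : J) (x : Dobj i), Dmap (𝟙 i) x = x) →
        (∀ {i j k : J} (u : i ⟶ j) (v : j ⟶ k) (x : Dobj i),
          Dmap (u ≫ v) x = Dmap v (Dmap u x)) →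
        (∀ {i j : J} (u : i ⟶ j), Function.Injective (Dmap u)) →
        ∀ (V : Type) (ℓ : ∀ i : J, Dobj i → V),
          (∀ {i j : J} (u : i ⟶ j) (x : Dobj i), ℓ j (Dmap u x) = ℓ i x) →
          (∀ i : J, Function.Injective (ℓ i)) →
          (∀ v : V, ∃ (i : J) (x : Dobj i), ℓ i x = v) →
          ∀ p : S.obj V, p ∉ Set.range (S.unit V) →
            ∃ (i : J) (x : S.obj (Dobj i)),
              x ∉ Set.range (S.unit (Dobj i)) ∧ S.map (ℓ i) x = p :=
  unit_complement_accessible_general S lam hacc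
end

section
/- Let H be an endofunctor on the category Inj of sets and injections. If there exists any H-algebra (a set X with an injection HX → X, or more generally a morphism θ : HX → X in Inj), then the initial chain of H converges at some ordinal, and hence an initial H-algebra exists. -/
/-- An endofunctor on the category `Inj` of sets and injections. -/
structure InjFunctor1 where
  obj : Type → Type
  map : ∀ {X Y : Type}, (X ↪ Y) → (obj X ↪ obj Y)
  map_id : ∀ (X : Type) (p : obj X), map (Function.Embedding.refl X) p = p
  map_comp : ∀ {X Y Z : Type} (f : X ↪ Y) (g : Y ↪ Z) (p : obj X),
      map (f.trans g) p = map g (map f p)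

/-- The initial chain `0 → H0 → H²0 → ⋯` of an endofunctor `H` on `Inj`,
with colimits (unions along injections) at limit ordinals. -/
structure InitialChain1 (H : InjFunctor1) where
  obj : Ordinal → Type
  hom : ∀ {a b : Ordinal}, a ≤ b → (obj a ↪ obj b)
  hom_refl : ∀ (a : Ordinal) (x : obj a), hom (le_refl a) x = x
  hom_trans : ∀ {a b c : Ordinal} (hab : a ≤ b) (hbc : b ≤ c) (x : obj a),
      hom (hab.trans hbc) x = hom hbc (hom hab x)
  zero_isEmpty : IsEmpty (obj 0)
  succ : ∀ (a : Ordinal), obj (a + 1) ≃ H.obj (obj a)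
  succ_hom : ∀ {a b : Ordinal} (hab : a ≤ b) (x : obj (a + 1)),
      succ b (hom (add_le_add_left hab 1) x) = H.map (hom hab) (succ a x)
  limit_surj : ∀ (a : Ordinal), Order.IsSuccLimit a → ∀ (x : obj a),
      ∃ (b : Ordinal) (h : b < a) (y : obj b), hom h.le y = x

/-!
Every algebra `(Y, φ)` receives a canonical cocone `b_a : C.obj a ↪ Y` from the initial chain,
built by transfinite recursion (`b_{a+1} = φ ∘ H b_a`, unions at limits) and unique because
every element of a nonzero stage comes from a successor stage. The ranges of the `b_a` form
an increasing family of subsets of the fixed set `Y`, so they cannot grow strictly at every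
successor step: some connecting map `C.obj a ↪ C.obj (a + 1)` is onto. Inverting
`C.succ a` then makes `C.obj a` an algebra whose algebra maps into `(Y, φ)` are exactly the
canonical `b_a`, so it is initial.
-/

namespace InitialChain1

open Function

variable {H : InjFunctor1} (C : InitialChain1 H) {Y : Type} (φ : H.obj Y ↪ Y)

@[simp]
theorem hom_le_refl (a : Ordinal) : C.hom (le_refl a) = Embedding.refl _ :=
  Embedding.ext (C.hom_refl a)

@[simp]
theorem hom_trans_hom {a b c : Ordinal} (hab : a ≤ b) (hbc : b ≤ c) :
    (C.hom hab).trans (C.hom hbc) = C.hom (hab.trans hbc) :=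
  Embedding.ext fun x => (C.hom_trans hab hbc x).symm

theorem exists_hom_add_one_eq {a : Ordinal} (ha : a ≠ 0) (x : C.obj a) :
    ∃ (c : Ordinal) (h : c + 1 ≤ a) (z : C.obj (c + 1)), C.hom h z = x := by
  rcases Ordinal.zero_or_succ_or_isSuccLimit a with rfl | ⟨c, rfl⟩ | hl
  · exact absurd rfl ha
  · exact ⟨c, le_rfl, x, C.hom_refl _ x⟩
  · obtain ⟨b, hb, y, rfl⟩ := C.limit_surj a hl x
    exact ⟨b, (hl.succ_lt hb).le, C.hom le_self_add y, (C.hom_trans _ _ y).symm⟩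

def succLift {b : Ordinal} (f : C.obj b ↪ Y) : C.obj (b + 1) ↪ Y :=
  ((C.succ b).toEmbedding.trans (H.map f)).trans φ

@[simp]
theorem succLift_apply {b : Ordinal} (f : C.obj b ↪ Y) (x : C.obj (b + 1)) :
    C.succLift φ f x = φ (H.map f (C.succ b x)) :=
  rfl

theorem hom_add_one_trans_succLift {b c : Ordinal} (hcb : c ≤ b) (f : C.obj b ↪ Y) :
    (C.hom (add_le_add_left hcb 1)).trans (C.succLift φ f) =
      C.succLift φ ((C.hom hcb).trans f) := by
  ext z
  simp only [Embedding.trans_apply, succLift_apply]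
  rw [C.succ_hom hcb z, H.map_comp]

/-- `f` is the stage-`a` component of the canonical cocone into the algebra `(Y, φ)`. -/
def IsCanonical (a : Ordinal) (f : C.obj a ↪ Y) : Prop :=
  ∀ (c : Ordinal) (h : c + 1 ≤ a),
    (C.hom h).trans f = C.succLift φ ((C.hom (le_self_add.trans h)).trans f)

variable {C φ}

theorem IsCanonical.restrict {a b : Ordinal} {f : C.obj a ↪ Y} (hf : C.IsCanonical φ a f)
    (hba : b ≤ a) : C.IsCanonical φ b ((C.hom hba).trans f) := by
  intro c h
  simpa only [← Embedding.trans_assoc, hom_trans_hom] using hf c (h.trans hba)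

theorem IsCanonical.unique {a : Ordinal} {f g : C.obj a ↪ Y} (hf : C.IsCanonical φ a f)
    (hg : C.IsCanonical φ a g) : f = g := by
  induction a using WellFoundedLT.induction with
  | _ a ih =>
    ext x
    rcases eq_or_ne a 0 with rfl | ha
    · exact (C.zero_isEmpty.false x).elim
    obtain ⟨c, h, z, rfl⟩ := C.exists_hom_add_one_eq ha x
    have hca : c ≤ a := le_self_add.trans h
    have hrestrict : (C.hom hca).trans f = (C.hom hca).trans g :=
      ih c (Order.add_one_le_iff.mp h) (hf.restrict hca) (hg.restrict hca)
    rw [← Embedding.trans_apply, ← Embedding.trans_apply, hf c h, hg c h, hrestrict]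

theorem IsCanonical.eq_succLift {b : Ordinal} {g : C.obj (b + 1) ↪ Y}
    (hg : C.IsCanonical φ (b + 1) g) : g = C.succLift φ ((C.hom le_self_add).trans g) := by
  simpa only [hom_le_refl, Embedding.refl_trans] using hg b le_rfl

theorem IsCanonical.hom_trans {a b : Ordinal} {f : C.obj a ↪ Y} {g : C.obj b ↪ Y}
    (hf : C.IsCanonical φ a f) (hg : C.IsCanonical φ b g) (hab : a ≤ b) :
    (C.hom hab).trans g = f :=
  (hg.restrict hab).unique hf

theorem IsCanonical.hom_trans_succLift {b : Ordinal} {g : C.obj b ↪ Y}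
    (hg : C.IsCanonical φ b g) : (C.hom le_self_add).trans (C.succLift φ g) = g := by
  ext y
  rcases eq_or_ne b 0 with rfl | hb
  · exact (C.zero_isEmpty.false y).elim
  obtain ⟨c, h, z, rfl⟩ := C.exists_hom_add_one_eq hb y
  have hcb : c ≤ b := le_self_add.trans h
  calc C.succLift φ g (C.hom le_self_add (C.hom h z))
      = ((C.hom (add_le_add_left hcb 1)).trans (C.succLift φ g)) z :=
        congrArg (C.succLift φ g) (C.hom_trans _ _ z).symm
    _ = g (C.hom h z) := by rw [hom_add_one_trans_succLift C φ hcb, ← hg c h]; rfl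

theorem IsCanonical.succLift {b : Ordinal} {g : C.obj b ↪ Y} (hg : C.IsCanonical φ b g) :
    C.IsCanonical φ (b + 1) (C.succLift φ g) := by
  intro c h
  have hcb : c ≤ b := Order.lt_add_one_iff.mp (Order.add_one_le_iff.mp h)
  rw [hom_add_one_trans_succLift C φ hcb, ← hom_trans_hom C hcb le_self_add,
    Embedding.trans_assoc, hg.hom_trans_succLift]

variable (C φ)

/-- Limit stages are colimits of the earlier stages in `Inj`. -/
theorem exists_hom_trans_eq_of_isSuccLimit {a : Ordinal} (hl : Order.IsSuccLimit a)
    (F : ∀ b < a, C.obj b ↪ Y)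
    (hF : ∀ c d (hc : c < a) (hd : d < a) (hcd : c ≤ d), (C.hom hcd).trans (F d hd) = F c hc) :
    ∃ f : C.obj a ↪ Y, ∀ b (hb : b < a), (C.hom hb.le).trans f = F b hb := by
  have hF_eq_le : ∀ c d (hc : c < a) (hd : d < a), c ≤ d → ∀ u w,
      F c hc u = F d hd w ↔ C.hom hc.le u = C.hom hd.le w := by
    intro c d hc hd hcd u w
    rw [← hF c d hc hd hcd, Embedding.trans_apply, (F d hd).injective.eq_iff,
      ← (C.hom hd.le).injective.eq_iff, ← C.hom_trans]
  have hF_eq : ∀ c d (hc : c < a) (hd : d < a) u w,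
      F c hc u = F d hd w ↔ C.hom hc.le u = C.hom hd.le w := by
    intro c d hc hd u w
    rcases le_total c d with hcd | hdc
    · exact hF_eq_le c d hc hd hcd u w
    · rw [eq_comm, hF_eq_le d c hd hc hdc w u, eq_comm]
  choose b hb y hy using C.limit_surj a hl
  refine ⟨⟨fun x => F (b x) (hb x) (y x), fun x x' hxx' => ?_⟩, fun d hd => ?_⟩
  · rwa [hF_eq, hy, hy] at hxx'
  · ext w
    exact (hF_eq _ _ _ _ _ _).mpr (hy _)

theorem exists_isCanonical (a : Ordinal) : ∃ f, C.IsCanonical φ a f := by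
  induction a using Ordinal.limitRecOn with
  | zero =>
    have := C.zero_isEmpty
    refine ⟨Embedding.ofIsEmpty, fun c h => ?_⟩
    ext z
    exact isEmptyElim (C.hom h z)
  | add_one b ih =>
    obtain ⟨g, hg⟩ := ih
    exact ⟨C.succLift φ g, hg.succLift⟩
  | limit a hl ih =>
    choose F hF using ih
    obtain ⟨f, hf⟩ := C.exists_hom_trans_eq_of_isSuccLimit hl F
      fun c d hc hd hcd => (hF c hc).hom_trans (hF d hd) hcd
    refine ⟨f, fun c h => ?_⟩
    have hc : c < a := Order.add_one_le_iff.mp h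
    have hc1 : c + 1 < a := hl.succ_lt hc
    rw [hf _ hc1, (hF _ hc1).eq_succLift, (hF c hc).hom_trans (hF _ hc1) le_self_add, hf c hc]

theorem exists_surjective_hom_add_one (θ : H.obj Y ↪ Y) :
    ∃ a : Ordinal, Surjective (C.hom (le_self_add : a ≤ a + 1)) := by
  by_contra! hns
  choose b hb using C.exists_isCanonical θ
  have hmono : Monotone fun a => Set.range (b a) := fun a c hac => by
    dsimp only
    rw [← (hb a).hom_trans (hb c) hac]
    exact Set.range_comp_subset_range (C.hom hac) (b c)
  have hsucc : ∀ a, Set.range (b a) ⊂ Set.range (b (a + 1)) := by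
    intro a
    obtain ⟨z, hz⟩ := not_forall.mp (hns a)
    refine (hmono le_self_add).ssubset_of_not_subset fun hsub => ?_
    obtain ⟨y, hy⟩ := hsub ⟨z, rfl⟩
    rw [← (hb a).hom_trans (hb (a + 1)) le_self_add] at hy
    exact hz ⟨y, (b (a + 1)).injective hy⟩
  have hstrict : StrictMono fun a => Set.range (b a) := fun a c hac =>
    (hsucc a).trans_subset (hmono (Order.add_one_le_iff.mpr hac))
  exact not_injective_of_ordinal _ hstrict.injective

variable {C} {a : Ordinal} (ha : Surjective (C.hom (le_self_add : a ≤ a + 1)))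

noncomputable def algebraAt : H.obj (C.obj a) ↪ C.obj a :=
  ((C.succ a).symm.trans (Equiv.ofBijective _ ⟨(C.hom _).injective, ha⟩).symm).toEmbedding

theorem hom_algebraAt (x : H.obj (C.obj a)) :
    C.hom le_self_add (algebraAt ha x) = (C.succ a).symm x :=
  Equiv.ofBijective_apply_symm_apply _ ⟨(C.hom _).injective, ha⟩ _

theorem algebraAt_succ_hom (w : C.obj a) : algebraAt ha (C.succ a (C.hom le_self_add w)) = w :=
  (C.hom le_self_add).injective (by rw [hom_algebraAt, Equiv.symm_apply_apply])

theorem isCanonical_iff_algebraAt (f : C.obj a ↪ Y) :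
    C.IsCanonical φ a f ↔ ∀ x, f (algebraAt ha x) = φ (H.map f x) := by
  refine ⟨fun hf x => ?_, fun hf c h => ?_⟩
  · rw [← DFunLike.congr_fun hf.hom_trans_succLift, Embedding.trans_apply, hom_algebraAt,
      succLift_apply, Equiv.apply_symm_apply]
  · have hca : c ≤ a := le_self_add.trans h
    ext z
    rw [Embedding.trans_apply, ← algebraAt_succ_hom ha (C.hom h z), hf, ← C.hom_trans,
      ← succLift_apply, ← Embedding.trans_apply, ← hom_add_one_trans_succLift C φ hca]

theorem existsUnique_algebraAt_hom :
    ∃! f : C.obj a ↪ Y, ∀ x, f (algebraAt ha x) = φ (H.map f x) := by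
  obtain ⟨g, hg⟩ := C.exists_isCanonical φ a
  refine ⟨g, (isCanonical_iff_algebraAt φ ha g).mp hg, fun f hf => ?_⟩
  exact ((isCanonical_iff_algebraAt φ ha f).mpr hf).unique hg

end InitialChain1

/-- If an endofunctor `H` on the category of sets and injections has any algebra
`θ : H X ↪ X`, then its initial chain converges at some ordinal, and hence an
initial `H`-algebra exists. -/
theorem initialChain_converges_of_algebra (H : InjFunctor1) (C : InitialChain1 H)
    (X : Type) (θ : H.obj X ↪ X) :
    (∃ a : Ordinal, Function.Surjective (C.hom (le_self_add : a ≤ a + 1))) ∧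
    (∃ (A : Type) (ρ : H.obj A ↪ A), ∀ (Y : Type) (φ : H.obj Y ↪ Y),
      ∃! f : A ↪ Y, ∀ x : H.obj A, f (ρ x) = φ (H.map f x)) := by
  obtain ⟨a, ha⟩ := C.exists_surjective_hom_add_one θ
  exact ⟨⟨a, ha⟩, C.obj a, InitialChain1.algebraAt ha,
    fun Y φ => InitialChain1.existsUnique_algebraAt_hom φ ha⟩
end

section
/- For every endofunctor H on Set there exists an endofunctor H̄ on Set that preserves finite intersections (pullbacks of pairs of injections) and agrees with H on all nonempty sets and all functions between nonempty sets. Specifically, H̄∅ may be taken as the equalizer of Ht, Hf : H1 → H2, where t, f : 1 → 2 are the two maps. -/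
/-- `F` preserves finite intersections: the pullback of any pair of injections is
sent to a pullback. -/
def PreservesFiniteIntersections (F : SetFunctor) : Prop :=
  ∀ (X A B : Type) (f : A → X) (g : B → X),
    Function.Injective f → Function.Injective g →
    ∀ (u : F.obj A) (v : F.obj B), F.map f u = F.map g v →
      ∃! w : F.obj {p : A × B // f p.1 = g p.2},
        F.map (fun p : {p : A × B // f p.1 = g p.2} => p.1.1) w = u ∧
        F.map (fun p : {p : A × B // f p.1 = g p.2} => p.1.2) w = v

/-!
Trnková's closure has a uniform description: `H̄ X` is the equalizer of the two maps
`H (X + 1) ⇉ H (X + 2)` sending the new point to either of two new points. Every set functor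
preserves intersections of injections whose intersection is nonempty, and `f + 1`, `g + 1`
always meet in the new point; the equalizer condition then descends along the injection
`π₁ + 2`, so `H̄` preserves all finite intersections.
-/

open Function Set

namespace SetFunctor

section

variable (F : SetFunctor)

theorem map_map_s9 {X Y Z : Type} (f : X → Y) (g : Y → Z) (x : F.obj X) :
    F.map g (F.map f x) = F.map (g ∘ f) x := by
  rw [F.map_comp]; rfl

theorem map_injective_of_leftInverse {X Y : Type} {f : X → Y} {r : Y → X}
    (hr : LeftInverse r f) : Injective (F.map f) := by
  intro a b h
  have h' := congrArg (F.map r) h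
  rwa [map_map_s9, map_map_s9, hr.comp_eq_id, F.map_id] at h'

theorem map_injective {X Y : Type} [Nonempty X] {f : X → Y} (hf : Injective f) :
    Injective (F.map f) :=
  F.map_injective_of_leftInverse (leftInverse_invFun hf)

theorem map_eq_of_leftInverse {X Y : Type} {f : X → Y} {r : Y → X} (hr : LeftInverse r f)
    (x : F.obj X) : F.map (f ∘ r) (F.map f x) = F.map f x := by
  rw [map_map_s9, comp_assoc, hr.comp_eq_id, comp_id]

/-- The retractions of `X` onto the images of `f` and `g` that send everything else into the
intersection compose to a map through the intersection, and both fix `F.map f u = F.map g v`. -/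
theorem exists_map_eq_of_nonempty_intersection {X A B P : Type} {f : A → X} {g : B → X}
    (hf : Injective f) (hg : Injective g) {p₁ : P → A} {p₂ : P → B} (hcomm : f ∘ p₁ = g ∘ p₂)
    (hpb : ∀ a b, f a = g b → ∃ p, p₁ p = a ∧ p₂ p = b) (p₀ : P) {u : F.obj A} {v : F.obj B}
    (huv : F.map f u = F.map g v) : ∃ w, F.map p₁ w = u ∧ F.map p₂ w = v := by
  have : Nonempty A := ⟨p₁ p₀⟩
  have : Nonempty B := ⟨p₂ p₀⟩
  set ρf : X → A := extend f id fun _ => p₁ p₀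
  set ρg : X → B := extend g id fun _ => p₂ p₀
  have hρf : LeftInverse ρf f := hf.extend_apply _ _
  have hρg : LeftInverse ρg g := hg.extend_apply _ _
  have hrange : range ((f ∘ ρf) ∘ (g ∘ ρg)) ⊆ range (f ∘ p₁) := by
    rintro _ ⟨x, rfl⟩
    by_cases h : ∃ a, f a = g (ρg x)
    · obtain ⟨a, ha⟩ := h
      obtain ⟨p, rfl, -⟩ := hpb a _ ha
      exact ⟨p, by simp only [comp_apply, ← ha, hρf (p₁ p)]⟩
    · exact ⟨p₀, by simp only [comp_apply, ρf, extend_apply' _ _ _ h]⟩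
  obtain ⟨r, hr⟩ := range_subset_range_iff_exists_comp.mp hrange
  have hfix : F.map (f ∘ p₁) (F.map r (F.map f u)) = F.map f u := by
    rw [map_map_s9, ← hr, ← map_map_s9, huv, map_eq_of_leftInverse F hρg, ← huv,
      map_eq_of_leftInverse F hρf]
  refine ⟨F.map r (F.map f u), F.map_injective hf ?_, F.map_injective hg ?_⟩
  · rwa [map_map_s9]
  · rw [map_map_s9, ← hcomm, hfix, huv]

end

theorem exists_option_map_eq_of_map_eq {X A B : Type} {f : A → X} {g : B → X}
    {a : Option A} {b : Option B} (h : Option.map f a = Option.map g b) :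
    ∃ p : Option {p : A × B // f p.1 = g p.2},
      Option.map (fun p => p.1.1) p = a ∧ Option.map (fun p => p.1.2) p = b := by
  cases a with
  | none => cases b with
    | none => exact ⟨none, rfl, rfl⟩
    | some b => simp at h
  | some a => cases b with
    | none => simp at h
    | some b => exact ⟨some ⟨(a, b), Option.some_injective _ h⟩, rfl, rfl⟩

def noneTo {X : Type} (b : Bool) : Option X → X ⊕ Bool := fun o => o.elim (.inr b) .inl

theorem noneTo_comp_map {X Y : Type} (f : X → Y) (b : Bool) :
    noneTo b ∘ Option.map f = Sum.map f id ∘ noneTo b := by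
  funext o; cases o <;> rfl

/-- For `X = ∅` this is the equalizer of `H 1 ⇉ H 2`; for nonempty `X` it is `H X`, embedded
by `H some`, since a split mono is an absolute equalizer. -/
def trnkovaClosure (H : SetFunctor) : SetFunctor where
  obj X := {a : H.obj (Option X) // H.map (noneTo true) a = H.map (noneTo false) a}
  map f a := ⟨H.map (Option.map f) a.1, by
    rw [map_map_s9, map_map_s9, noneTo_comp_map, noneTo_comp_map, ← map_map_s9, ← map_map_s9, a.2]⟩
  map_id X := by
    funext a
    apply Subtype.ext
    show H.map (Option.map id) a.1 = a.1
    rw [Option.map_id, H.map_id, id]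
  map_comp f g := by
    funext a
    exact Subtype.ext (by simp only [← Option.map_comp_map, H.map_comp, comp_apply])

variable (H : SetFunctor)

theorem trnkovaClosure_map_injective {X Y : Type} {f : X → Y} (hf : Injective f) :
    Injective (H.trnkovaClosure.map f) := fun _ _ h =>
  Subtype.ext (H.map_injective (Option.map_injective hf) (congrArg Subtype.val h))

theorem trnkovaClosure_preservesFiniteIntersections :
    PreservesFiniteIntersections H.trnkovaClosure := by
  intro X A B f g hf hg u v huv
  set P := {p : A × B // f p.1 = g p.2}
  have hfst : Injective fun p : P => p.1.1 := fun p q h =>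
    Subtype.ext (Prod.ext h (hg (p.2.symm.trans ((congrArg f h).trans q.2))))
  obtain ⟨w, hw₁, hw₂⟩ := H.exists_map_eq_of_nonempty_intersection
    (Option.map_injective hf) (Option.map_injective hg)
    (p₁ := Option.map fun p : P => p.1.1) (p₂ := Option.map fun p : P => p.1.2)
    (by rw [Option.map_comp_map, Option.map_comp_map]; exact congrArg _ (funext Subtype.prop))
    (fun _ _ => exists_option_map_eq_of_map_eq) none (congrArg Subtype.val huv)
  have hw : H.map (noneTo true) w = H.map (noneTo false) w := by
    apply H.map_injective (hfst.sumMap injective_id)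
    rw [map_map_s9, map_map_s9, ← noneTo_comp_map, ← noneTo_comp_map, ← map_map_s9, ← map_map_s9, hw₁, u.2]
  refine ⟨⟨w, hw⟩, ⟨Subtype.ext hw₁, Subtype.ext hw₂⟩, fun w' hw' => ?_⟩
  exact H.trnkovaClosure_map_injective hfst (hw'.1.trans (Subtype.ext hw₁).symm)

theorem map_some_map_getD {X : Type} (x₀ : X) (a : H.trnkovaClosure.obj X) :
    H.map some (H.map (·.getD x₀) a.1) = a.1 := by
  set m : X ⊕ Bool → Option X := Sum.elim some fun b => bif b then none else some x₀
  have hm_true : m ∘ noneTo true = id := by funext o; cases o <;> rfl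
  have hm_false : m ∘ noneTo false = some ∘ (·.getD x₀) := by funext o; cases o <;> rfl
  calc H.map some (H.map (·.getD x₀) a.1)
      = H.map m (H.map (noneTo false) a.1) := by rw [map_map_s9, map_map_s9, hm_false]
    _ = H.map m (H.map (noneTo true) a.1) := by rw [a.2]
    _ = a.1 := by rw [map_map_s9, hm_true, H.map_id, id]

def trnkovaClosureEquiv {X : Type} (x₀ : X) : H.trnkovaClosure.obj X ≃ H.obj X where
  toFun a := H.map (·.getD x₀) a.1
  invFun b := ⟨H.map some b, by rw [map_map_s9, map_map_s9]; rfl⟩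
  left_inv a := Subtype.ext (H.map_some_map_getD x₀ a)
  right_inv b := (H.map_map_s9 some (·.getD x₀) b).trans (congrFun (H.map_id X) b)

theorem trnkovaClosureEquiv_map {X Y : Type} (x₀ : X) (y₀ : Y) (f : X → Y)
    (a : H.trnkovaClosure.obj X) :
    H.trnkovaClosureEquiv y₀ (H.trnkovaClosure.map f a) = H.map f (H.trnkovaClosureEquiv x₀ a) := by
  obtain ⟨b, rfl⟩ := (H.trnkovaClosureEquiv x₀).symm.surjective a
  have hsymm : H.trnkovaClosure.map f ((H.trnkovaClosureEquiv x₀).symm b) =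
      (H.trnkovaClosureEquiv y₀).symm (H.map f b) :=
    Subtype.ext ((H.map_map_s9 some _ b).trans (H.map_map_s9 f some b).symm)
  rw [hsymm, Equiv.apply_symm_apply, Equiv.apply_symm_apply]

def trnkovaClosureEmptyEmbedding : H.trnkovaClosure.obj Empty ↪ H.obj PUnit where
  toFun a := H.map (fun _ => PUnit.unit) a.1
  inj' := (H.map_injective_of_leftInverse (r := fun _ => none)
    fun _ => Subsingleton.elim _ _).comp Subtype.val_injective

theorem range_trnkovaClosureEmptyEmbedding :
    range H.trnkovaClosureEmptyEmbedding =
      {a : H.obj PUnit | H.map (fun _ => true) a = H.map (fun _ => false) a} := by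
  ext c
  constructor
  · rintro ⟨a, rfl⟩
    have hconst (b : Bool) : (fun _ : PUnit => b) ∘ (fun _ : Option Empty => PUnit.unit) =
        Sum.elim Empty.elim id ∘ noneTo b := by
      funext o; cases o with
      | none => rfl
      | some e => exact e.elim
    show H.map _ (H.map _ a.1) = H.map _ (H.map _ a.1)
    rw [map_map_s9, map_map_s9, hconst, hconst, ← map_map_s9, ← map_map_s9, a.2]
  · intro hc
    refine ⟨⟨H.map (fun _ => none) c, ?_⟩, ?_⟩
    · rw [map_map_s9, map_map_s9]
      show H.map (Sum.inr ∘ fun _ => true) c = H.map (Sum.inr ∘ fun _ => false) c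
      rw [← map_map_s9, ← map_map_s9, hc]
    · show H.map _ (H.map _ c) = c
      rw [map_map_s9]; exact congrFun (H.map_id PUnit) c

end SetFunctor

/-- Trnková's theorem: every set functor `H` admits a finite-intersection-preserving
modification `H'` agreeing with `H` (naturally) on all nonempty sets and all functions
between nonempty sets; moreover `H' ∅` can be taken to be the equalizer of
`H t, H f : H 1 → H 2` for the two maps `t, f : 1 → 2`. -/
theorem trnkova_closure_exists (H : SetFunctor) :
    ∃ H' : SetFunctor, PreservesFiniteIntersections H' ∧
      ∃ e : ∀ X : Type, Nonempty X → (H'.obj X ≃ H.obj X),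
        (∀ (X Y : Type) (hX : Nonempty X) (hY : Nonempty Y) (f : X → Y) (x : H'.obj X),
          e Y hY (H'.map f x) = H.map f (e X hX x)) ∧
        ∃ j : H'.obj Empty ↪ H.obj PUnit,
          Set.range j =
            {a : H.obj PUnit |
              H.map (fun _ => true) a = H.map (fun _ => false) a} :=
  ⟨H.trnkovaClosure, H.trnkovaClosure_preservesFiniteIntersections,
    fun _ hX => H.trnkovaClosureEquiv hX.some,
    fun _ _ hX hY f x => H.trnkovaClosureEquiv_map hX.some hY.some f x,
    H.trnkovaClosureEmptyEmbedding, H.range_trnkovaClosureEmptyEmbedding⟩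
end

section
/- Let S be a consistent monad on Set such that Sf(y) = y for every set Y, every function f : Y → Y, and every y ∈ SY \ range(η_Y). Then, setting E = S1 \ range(η_1), for every nonempty set X the map r_X : X + E → SX, given by η_X on X and e ↦ Sg(e) for any function g : 1 → X on E, is a well-defined bijection natural in X. Hence S restricted to nonempty sets is isomorphic to the exception monad X ↦ X + E. -/
/-!
For a point `g : 1 → X`, the map `! : X → 1` is a retraction of `g`, so `S g` is injective and
sends non-units of `S 1` to non-units of `S X`. The fixing hypothesis, applied to the constant
endomaps of `X`, makes `S g e` independent of `g` for a non-unit `e`, and recovers every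
non-unit `p ∈ S X` as `S g (S ! p)`.
-/

namespace SetMonad

variable (S : SetMonad)

theorem map_map {X Y Z : Type} (f : X → Y) (g : Y → Z) (x : S.obj X) :
    S.map g (S.map f x) = S.map (g ∘ f) x := by
  rw [S.map_comp]; rfl

theorem map_map_of_leftInverse {X Y : Type} {f : X → Y} {g : Y → X}
    (h : Function.LeftInverse g f) (x : S.obj X) : S.map g (S.map f x) = x := by
  rw [map_map, h.comp_eq_id, S.map_id]; rfl

theorem map_mem_range_unit {X Y : Type} (f : X → Y) {x : S.obj X}
    (hx : x ∈ Set.range (S.unit X)) : S.map f x ∈ Set.range (S.unit Y) := by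
  obtain ⟨a, rfl⟩ := hx
  exact ⟨f a, (S.unit_natural f a).symm⟩

theorem map_mem_range_unit_iff {X Y : Type} {f : X → Y} {g : Y → X}
    (h : Function.LeftInverse g f) {x : S.obj X} :
    S.map f x ∈ Set.range (S.unit Y) ↔ x ∈ Set.range (S.unit X) :=
  ⟨fun hfx => S.map_map_of_leftInverse h x ▸ S.map_mem_range_unit g hfx,
    S.map_mem_range_unit f⟩

abbrev Exceptions : Type := {e : S.obj PUnit // e ∉ Set.range (S.unit PUnit)}

def FixesNonUnits : Prop :=
  ∀ (Y : Type) (f : Y → Y) (y : S.obj Y), y ∉ Set.range (S.unit Y) → S.map f y = y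

/-- The comparison map `r_X : X + E → S X`, computed with the constant point `x₀`. -/
def exceptionMap {X : Type} (x₀ : X) : X ⊕ S.Exceptions → S.obj X :=
  Sum.elim (S.unit X) fun e => S.map (fun _ => x₀) e.1

theorem exceptionMap_injective (hcons : ∀ X : Type, Function.Injective (S.unit X))
    {X : Type} (x₀ : X) : Function.Injective (S.exceptionMap x₀) := by
  have hret : Function.LeftInverse (fun _ : X => PUnit.unit) (fun _ : PUnit => x₀) :=
    fun _ => rfl
  rintro (x | e) (x' | e') h
  · exact congrArg Sum.inl (hcons X h)
  · exact absurd ((S.map_mem_range_unit_iff hret).1 ⟨x, h⟩) e'.2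
  · exact absurd ((S.map_mem_range_unit_iff hret).1 ⟨x', h.symm⟩) e.2
  · have h' := congrArg (S.map fun _ : X => PUnit.unit) h
    simp only [exceptionMap, Sum.elim_inr, S.map_map_of_leftInverse hret] at h'
    exact congrArg Sum.inr (Subtype.ext h')

variable {S}

namespace FixesNonUnits

/-- Every `g' : 1 → X` factors as the constant map at `g' ()` after `g`. -/
theorem map_punit_eq (hfix : S.FixesNonUnits) {X : Type} (g g' : PUnit → X)
    {e : S.obj PUnit} (he : e ∉ Set.range (S.unit PUnit)) : S.map g e = S.map g' e := by
  have hge : S.map g e ∉ Set.range (S.unit X) :=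
    mt (S.map_mem_range_unit_iff (g := fun _ => PUnit.unit) fun _ => rfl).1 he
  rw [← hfix X (fun _ => g' PUnit.unit) _ hge, map_map]
  rfl

theorem exceptionMap_inr (hfix : S.FixesNonUnits) {X : Type} (x₀ : X)
    (e : S.Exceptions) (g : PUnit → X) : S.exceptionMap x₀ (Sum.inr e) = S.map g e.1 :=
  hfix.map_punit_eq _ g e.2

theorem exceptionMap_surjective (hfix : S.FixesNonUnits) {X : Type} (x₀ : X) :
    Function.Surjective (S.exceptionMap x₀) := by
  intro p
  by_cases hp : p ∈ Set.range (S.unit X)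
  · obtain ⟨x, rfl⟩ := hp
    exact ⟨Sum.inl x, rfl⟩
  · have hrecover : S.map (fun _ => x₀) (S.map (fun _ : X => PUnit.unit) p) = p := by
      rw [map_map]; exact hfix X _ p hp
    have hcollapse : S.map (fun _ : X => PUnit.unit) p ∉ Set.range (S.unit PUnit) :=
      fun hmem => hp (hrecover ▸ S.map_mem_range_unit _ hmem)
    exact ⟨Sum.inr ⟨_, hcollapse⟩, hrecover⟩

theorem exceptionMap_natural (hfix : S.FixesNonUnits) {X Y : Type} (f : X → Y)
    (x₀ : X) (y₀ : Y) (z : X ⊕ S.Exceptions) :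
    S.exceptionMap y₀ (Sum.map f id z) = S.map f (S.exceptionMap x₀ z) := by
  rcases z with x | e
  · exact (S.unit_natural f x).symm
  · exact (hfix.exceptionMap_inr y₀ e (f ∘ fun _ => x₀)).trans (S.map_map _ f e.1).symm

end FixesNonUnits

end SetMonad

open SetMonad in
/-- If a consistent monad `S` on Set satisfies `S f (y) = y` for every `f : Y → Y` and
every `y` outside the range of the unit, then with `E = S1 \ range η₁` the maps
`r_X : X + E → S X` (given by `η_X` on `X` and by `e ↦ S g (e)` for any `g : 1 → X`
on `E`) are well defined bijections, natural in nonempty `X`.  Hence `S` restricted to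
nonempty sets is isomorphic to the exception monad `X ↦ X + E`. -/
theorem fixing_monad_is_exception_monad (S : SetMonad)
    (hcons : ∀ X : Type, Function.Injective (S.unit X))
    (hfix : ∀ (Y : Type) (f : Y → Y) (y : S.obj Y),
      y ∉ Set.range (S.unit Y) → S.map f y = y) :
    ∃ r : ∀ X : Type, Nonempty X →
        (X ⊕ {e : S.obj PUnit // e ∉ Set.range (S.unit PUnit)} → S.obj X),
      (∀ (X : Type) (hX : Nonempty X) (x : X), r X hX (Sum.inl x) = S.unit X x) ∧
      (∀ (X : Type) (hX : Nonempty X)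
          (e : {e : S.obj PUnit // e ∉ Set.range (S.unit PUnit)}) (g : PUnit → X),
        r X hX (Sum.inr e) = S.map g e.1) ∧
      (∀ (X : Type) (hX : Nonempty X), Function.Bijective (r X hX)) ∧
      (∀ (X Y : Type) (hX : Nonempty X) (hY : Nonempty Y) (f : X → Y)
          (z : X ⊕ {e : S.obj PUnit // e ∉ Set.range (S.unit PUnit)}),
        r Y hY (Sum.map f id z) = S.map f (r X hX z)) :=
  ⟨fun _ hX => S.exceptionMap hX.some,
    fun _ _ _ => rfl,
    fun _ hX e g => FixesNonUnits.exceptionMap_inr hfix hX.some e g,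
    fun _ hX => ⟨S.exceptionMap_injective hcons hX.some,
      FixesNonUnits.exceptionMap_surjective hfix hX.some⟩,
    fun _ _ hX hY f z => FixesNonUnits.exceptionMap_natural hfix f hX.some hY.some z⟩
end

section
/- Let n > α be infinite cardinals with the same cofinality. Then there exists a family of more than n subsets of n, each of cardinality α, such that any two distinct members of the family intersect in a set of cardinality strictly less than α. -/
/-!
By Zorn's lemma there is a maximal almost `α`-disjoint family `M` of subsets of `X`; it suffices
to show that a family `M` of at most `n` sets of size `α` is never maximal. Let `κ = cof α = cof n`,
fix increasing cofinal `κ`-sequences `fᵢ` in `α` and `gᵢ` in `n`, enumerate `M` in order type at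
most `n`, and split `X` into `κ` disjoint slices of size `n`. The members of `M` enumerated up to
`gᵢ` cover fewer than `n` points, so the `i`-th slice contains a set `Bᵢ` of size `|[0, fᵢ]| < α`
avoiding all of them. Since the intervals `[0, fᵢ]` cover `α`, the union `B` of the `Bᵢ` has size
`α`, and a member of `M` enumerated up to `g_{i₀}` meets only the `Bᵢ` with `i ≤ i₀`, hence fewer
than `α` points of `B`.
-/

open Cardinal Function Set

universe u

theorem exists_strictMono_isCofinal_range {T : Type u} [LinearOrder T] [WellFoundedLT T]
    {κ : Cardinal} (hT : Order.cof T = κ) :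
    ∃ f : κ.ord.ToType → T, StrictMono f ∧ IsCofinal (range f) := by
  subst hT
  obtain ⟨s, hs, hs_type⟩ := Ordinal.exists_ord_cof_eq T
  rw [← Ordinal.type_toType (Order.cof T).ord, Ordinal.type_eq] at hs_type
  obtain ⟨e⟩ := hs_type
  refine ⟨fun i => e.symm i, fun i j hij => e.symm.map_rel_iff.2 hij, fun x => ?_⟩
  obtain ⟨y, hy, hxy⟩ := hs x
  exact ⟨y, ⟨e ⟨y, hy⟩, by simp⟩, hxy⟩

namespace Cardinal

theorem mk_Iic_toType_ord_lt {c : Cardinal} (hc : ℵ₀ ≤ c) (i : c.ord.ToType) : #(Iic i) < c := by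
  have hmk : #c.ord.ToType = c := by rw [mk_toType, card_ord]
  have := mk_Iic_lt i (by rw [hmk, Ordinal.type_toType]) (by rwa [hmk])
  rwa [hmk] at this

theorem mk_iUnion_le_of_le {X ι : Type u} {a : Cardinal} (ha : ℵ₀ ≤ a) (hι : #ι ≤ a)
    {s : ι → Set X} (hs : ∀ i, #(s i) ≤ a) : #(⋃ i, s i) ≤ a :=
  (mk_iUnion_le s).trans ((mul_le_mul' hι (ciSup_le' hs)).trans (mul_eq_self ha).le)

theorem mk_iUnion_lt_of_le {X ι : Type u} {a c : Cardinal} (hc : ℵ₀ ≤ c) (hι : #ι < c)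
    {s : ι → Set X} (hs : ∀ i, #(s i) ≤ a) (ha : a < c) : #(⋃ i, s i) < c :=
  (mk_iUnion_le s).trans_lt (mul_lt_of_lt hc hι ((ciSup_le' hs).trans_lt ha))

theorem mk_le_sum_mk_Iic {T ι : Type u} [Preorder T] {f : ι → T} (hf : IsCofinal (range f)) :
    #T ≤ sum fun i => #(Iic (f i)) := by
  have hcover : ⋃ i, Iic (f i) = Set.univ := by
    refine eq_univ_of_forall fun x => ?_
    obtain ⟨_, ⟨i, rfl⟩, hx⟩ := hf x
    exact mem_iUnion.2 ⟨i, hx⟩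
  rw [← mk_univ, ← hcover]
  exact mk_iUnion_le_sum_mk

theorem mk_sdiff_eq_of_mk_lt {X : Type u} {s t : Set X} (hs : ℵ₀ ≤ #s) (ht : #t < #s) :
    #(s \ t : Set X) = #s := by
  refine (mk_le_mk_of_subset sdiff_subset).antisymm (le_of_not_gt fun h => ?_)
  exact (le_mk_sdiff_add_mk s t).not_gt (add_lt_of_lt hs h ht)

end Cardinal

theorem exists_pairwise_disjoint_mk_eq {X ι : Type u} (hX : ℵ₀ ≤ #X) (hι : #ι ≤ #X) :
    ∃ P : ι → Set X, Pairwise (Disjoint on P) ∧ ∀ i, #(P i) = #X := by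
  cases isEmpty_or_nonempty ι
  · exact ⟨fun _ => ∅, fun i => isEmptyElim i, fun i => isEmptyElim i⟩
  obtain ⟨ψ⟩ : Nonempty (ι × X ≃ X) := by
    rw [← Cardinal.eq, mk_prod, lift_id, lift_id, mul_eq_right hX hι (mk_ne_zero ι)]
  refine ⟨fun i => range fun x => ψ (i, x), fun i j hij => ?_, fun i => ?_⟩
  · exact disjoint_range_iff.2 fun x y hxy => hij (congrArg Prod.fst (ψ.injective hxy))
  · exact mk_range_eq _ (ψ.injective.comp (Prod.mk_right_injective i))

def IsAlmostDisjointFamily {X : Type u} (α : Cardinal.{u}) (𝒜 : Set (Set X)) : Prop :=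
  (∀ s ∈ 𝒜, #s = α) ∧ ∀ s ∈ 𝒜, ∀ t ∈ 𝒜, s ≠ t → #(s ∩ t : Set X) < α

namespace IsAlmostDisjointFamily

theorem exists_maximal (X : Type u) (α : Cardinal.{u}) :
    ∃ M : Set (Set X), Maximal (IsAlmostDisjointFamily α) M := by
  refine zorn_subset {𝒜 | IsAlmostDisjointFamily α 𝒜} fun c hc hchain => ?_
  refine ⟨⋃₀ c, ⟨?_, ?_⟩, fun s hs => subset_sUnion_of_mem hs⟩
  · rintro s ⟨𝒜, h𝒜, hs⟩
    exact (hc h𝒜).1 s hs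
  · rintro s ⟨𝒜, h𝒜, hs⟩ t ⟨ℬ, hℬ, ht⟩ hst
    rcases hchain.total h𝒜 hℬ with h | h
    · exact (hc hℬ).2 s (h hs) t ht hst
    · exact (hc h𝒜).2 s hs t (h ht) hst

theorem insert {X : Type u} {α : Cardinal.{u}} {𝒜 : Set (Set X)}
    (h𝒜 : IsAlmostDisjointFamily α 𝒜) {B : Set X} (hB : #B = α)
    (hB𝒜 : ∀ A ∈ 𝒜, #(B ∩ A : Set X) < α) : IsAlmostDisjointFamily α (insert B 𝒜) := by
  refine ⟨forall_mem_insert.2 ⟨hB, h𝒜.1⟩, ?_⟩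
  rintro s (rfl | hs) t (rfl | ht) hst
  · exact absurd rfl hst
  · exact hB𝒜 t ht
  · exact inter_comm s t ▸ hB𝒜 s hs
  · exact h𝒜.2 s hs t ht hst

end IsAlmostDisjointFamily

theorem mk_iUnion_of_embedding_le_lt {X : Type u} {α : Cardinal.{u}} {𝒜 : Set (Set X)} (hX : ℵ₀ ≤ #X)
    (hαX : α < #X) (h𝒜α : ∀ A ∈ 𝒜, #A ≤ α) (e : 𝒜 ↪ (#X).ord.ToType) (x : (#X).ord.ToType) :
    #(⋃ A : {A : 𝒜 // e A ≤ x}, (A : Set X)) < #X := by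
  refine mk_iUnion_lt_of_le hX ?_ (fun A => h𝒜α _ A.1.2) hαX
  refine (mk_le_of_injective (f := fun A => (⟨e A.1, A.2⟩ : Iic x)) ?_).trans_lt
    (mk_Iic_toType_ord_lt hX x)
  intro A A' h
  exact Subtype.ext (e.injective (congrArg Subtype.val h))

theorem mk_iUnion_eq_of_mk_eq_mk_Iic {X ι : Type u} {α : Cardinal.{u}} (hα : ℵ₀ ≤ α)
    (hι : #ι ≤ α) {f : ι → α.ord.ToType} (hf : IsCofinal (range f)) {B : ι → Set X}
    (hB_disj : Pairwise (Disjoint on B)) (hB : ∀ i, #(B i) = #(Iic (f i))) :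
    #(⋃ i, B i) = α := by
  refine le_antisymm ?_ ?_
  · exact mk_iUnion_le_of_le hα hι fun i => (hB i).trans_le (mk_Iic_toType_ord_lt hα _).le
  · calc α = #α.ord.ToType := by rw [mk_toType, card_ord]
      _ ≤ sum fun i => #(Iic (f i)) := mk_le_sum_mk_Iic hf
      _ = #(⋃ i, B i) := by rw [mk_iUnion_eq_sum_mk hB_disj]; simp only [hB]

theorem exists_mk_eq_forall_mk_inter_lt {X : Type u} {α : Cardinal.{u}} (hα : ℵ₀ ≤ α)
    (hαX : α < #X) (hcof : (#X).ord.cof = α.ord.cof) (𝒜 : Set (Set X)) (h𝒜 : #𝒜 ≤ #X)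
    (h𝒜α : ∀ A ∈ 𝒜, #A ≤ α) : ∃ B : Set X, #B = α ∧ ∀ A ∈ 𝒜, #(B ∩ A : Set X) < α := by
  have hX : ℵ₀ ≤ #X := hα.trans hαX.le
  have hκ : ℵ₀ ≤ α.ord.cof :=
    Ordinal.aleph0_le_cof_iff.2 (Ordinal.one_lt_cof_iff.2 (isSuccLimit_ord hα))
  let ι := α.ord.cof.ord.ToType
  have hι : #ι ≤ α := by rw [mk_toType, card_ord]; exact Ordinal.cof_ord_le α
  obtain ⟨f, hf, hf_cof⟩ : ∃ f : ι → α.ord.ToType, StrictMono f ∧ IsCofinal (range f) :=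
    exists_strictMono_isCofinal_range (Ordinal.cof_toType _)
  obtain ⟨g, hg, hg_cof⟩ : ∃ g : ι → (#X).ord.ToType, StrictMono g ∧ IsCofinal (range g) :=
    exists_strictMono_isCofinal_range ((Ordinal.cof_toType _).trans hcof)
  obtain ⟨e⟩ : Nonempty (𝒜 ↪ (#X).ord.ToType) := by rwa [← le_def, mk_toType, card_ord]
  let S i := ⋃ A : {A : 𝒜 // e A ≤ g i}, (A : Set X)
  have hS i : #(S i) < #X := mk_iUnion_of_embedding_le_lt hX hαX h𝒜α e (g i)
  obtain ⟨P, hP_disj, hP⟩ := exists_pairwise_disjoint_mk_eq hX (hι.trans hαX.le)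
  have hB i : ∃ B ⊆ P i \ S i, #B = #(Iic (f i)) := by
    refine le_mk_iff_exists_subset.1 ?_
    rw [mk_sdiff_eq_of_mk_lt (hP i ▸ hX) (hP i ▸ hS i), hP i]
    exact (mk_Iic_toType_ord_lt hα _).le.trans hαX.le
  choose B hBPS hB using hB
  have hB_disj : Pairwise (Disjoint on B) := fun i j hij =>
    (hP_disj hij).mono ((hBPS i).trans sdiff_subset) ((hBPS j).trans sdiff_subset)
  refine ⟨⋃ i, B i, mk_iUnion_eq_of_mk_eq_mk_Iic hα hι hf_cof hB_disj hB, fun A hA => ?_⟩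
  obtain ⟨_, ⟨i₀, rfl⟩, hi₀⟩ := hg_cof (e ⟨A, hA⟩)
  have hsub : (⋃ i, B i) ∩ A ⊆ ⋃ i : Iic i₀, B i := by
    rintro x ⟨hxB, hxA⟩
    obtain ⟨i, hi⟩ := mem_iUnion.1 hxB
    refine mem_iUnion.2 ⟨⟨i, mem_Iic.2 (not_lt.1 fun hi₀i => ?_)⟩, hi⟩
    have hAS : A ⊆ S i := subset_iUnion_of_subset ⟨⟨A, hA⟩, hi₀.trans (hg hi₀i).le⟩ subset_rfl
    exact (hBPS i hi).2 (hAS hxA)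
  refine (mk_le_mk_of_subset hsub).trans_lt (mk_iUnion_lt_of_le hα ?_ (fun i => ?_)
    (mk_Iic_toType_ord_lt hα (f i₀)))
  · exact (mk_Iic_toType_ord_lt hκ i₀).trans_le (Ordinal.cof_ord_le α)
  · exact (hB i).trans_le (mk_le_mk_of_subset (Iic_subset_Iic.2 (hf.monotone i.2)))

/-- For infinite cardinals `n > α` of the same cofinality there is an almost
`α`-disjoint family of more than `n` subsets of a set of cardinality `n`: each member
has cardinality `α` and distinct members intersect in fewer than `α` elements. -/
theorem exists_almost_alpha_disjoint_family (α n : Cardinal)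
    (hα : Cardinal.aleph0 ≤ α) (hn : α < n) (hcof : n.ord.cof = α.ord.cof)
    (X : Type) (hX : Cardinal.mk X = n) :
    ∃ 𝒜 : Set (Set X),
      n < Cardinal.mk 𝒜 ∧
      (∀ s ∈ 𝒜, Cardinal.mk s = α) ∧
      (∀ s ∈ 𝒜, ∀ t ∈ 𝒜, s ≠ t → Cardinal.mk ↥(s ∩ t) < α) := by
  subst hX
  obtain ⟨M, hM⟩ := IsAlmostDisjointFamily.exists_maximal X α
  refine ⟨M, lt_of_not_ge fun hMX => ?_, hM.prop⟩
  obtain ⟨B, hB, hBM⟩ := exists_mk_eq_forall_mk_inter_lt hα hn hcof M hMX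
    fun A hA => (hM.prop.1 A hA).le
  have hB_mem : B ∈ M := hM.mem_of_prop_insert (hM.prop.insert hB hBM)
  exact (hBM B hB_mem).ne (by rw [inter_self, hB])
end

section
/- Let H be a λ-accessible endofunctor on Set for a regular cardinal λ, and let λ₀ ≥ λ be an infinite upper bound on the cardinalities of Hn for all cardinals n < λ. Then for every cardinal κ ≥ λ₀, the set H(2^κ) has cardinality at most 2^κ. -/
/-! Every element of `H X` is `H f y` for some `f : c → X` with `c < λ` and `y ∈ H c`, so
`|H X| ≤ λ · sup_{c < λ} |X|^c · |H c|`. For `X = 2^κ` each term is at most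
`(2^κ)^κ · λ₀ = 2^(κ·κ) · λ₀ = 2^κ`. -/

open Cardinal Set

def SetFunctor.IsAccessible (H : SetFunctor) (lam : Cardinal) : Prop :=
  ∀ (X : Type) (x : H.obj X), ∃ c : Cardinal, c < lam ∧
    ∃ f : c.out → X, x ∈ Set.range (H.map f)

theorem Cardinal.exists_mk_Iio_eq_of_lt {c lam : Cardinal} (h : c < lam) :
    ∃ i : lam.ord.ToType, #(Iio i) = c := by
  have hc : c.ord < Ordinal.type (α := lam.ord.ToType) (· < ·) := by
    rwa [Ordinal.type_toType, ord_lt_ord]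
  obtain ⟨i, hi⟩ := Ordinal.typein_surj _ hc
  exact ⟨i, by rw [← card_ord c, ← hi, Ordinal.card_typein]; rfl⟩

theorem SetFunctor.mk_obj_le_of_isAccessible {H : SetFunctor} {lam : Cardinal}
    (hH : H.IsAccessible lam) (X : Type) {μ : Cardinal} (hμ : ℵ₀ ≤ μ) (hlam : lam ≤ μ)
    (hterm : ∀ c < lam, #X ^ c * #(H.obj c.out) ≤ μ) : #(H.obj X) ≤ μ := by
  -- indexing the cardinals `c < lam` by `lam.ord.ToType` keeps the sigma type in `Type`
  let g : lam.ord.ToType → Cardinal := fun i => #(Iio i)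
  have hsurj : Function.Surjective
      (fun p : Σ i, ((g i).out → X) × H.obj (g i).out => H.map p.2.1 p.2.2) := by
    intro x
    obtain ⟨c, hc, f, y, rfl⟩ := hH X x
    obtain ⟨i, hi : g i = c⟩ := exists_mk_Iio_eq_of_lt hc
    subst hi
    exact ⟨⟨i, f, y⟩, rfl⟩
  calc #(H.obj X) ≤ #(Σ i, ((g i).out → X) × H.obj (g i).out) := mk_le_of_surjective hsurj
    _ ≤ sum fun _ : lam.ord.ToType => μ := by
        rw [mk_sigma]
        refine sum_le_sum _ _ fun i => ?_
        simpa [mk_arrow, mul_comm] using hterm _ (by simpa using mk_Iio_lt i)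
    _ = lam * μ := by rw [sum_const', mk_ord_toType]
    _ ≤ μ := mul_le_of_le hμ hlam le_rfl

theorem Cardinal.two_power_power_le {κ c : Cardinal} (hκ : ℵ₀ ≤ κ) (hc : c ≤ κ) :
    ((2 : Cardinal) ^ κ) ^ c ≤ 2 ^ κ :=
  calc ((2 : Cardinal) ^ κ) ^ c ≤ (2 ^ κ) ^ κ := power_le_power_left (power_ne_zero κ two_ne_zero) hc
    _ = 2 ^ κ := by rw [← power_mul, mul_eq_self hκ]

theorem accessible_fixpoints_of_powers_general (H : SetFunctor)
    (lam : Cardinal)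
    (hacc : ∀ (X : Type) (x : H.obj X), ∃ c : Cardinal, c < lam ∧
      ∃ f : c.out → X, x ∈ Set.range (H.map f))
    (lam0 : Cardinal) (hle : lam ≤ lam0) (hinf : Cardinal.aleph0 ≤ lam0)
    (hbound : ∀ c : Cardinal, c < lam → Cardinal.mk (H.obj c.out) ≤ lam0)
    (κ : Cardinal) (hκ : lam0 ≤ κ) :
    Cardinal.mk (H.obj ((2 : Cardinal) ^ κ).out) ≤ (2 : Cardinal) ^ κ := by
  have hκ_inf : ℵ₀ ≤ κ := hinf.trans hκ
  have hκ_le : κ ≤ 2 ^ κ := (cantor κ).le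
  have h2κ_inf : ℵ₀ ≤ 2 ^ κ := hκ_inf.trans hκ_le
  refine SetFunctor.mk_obj_le_of_isAccessible hacc _ h2κ_inf (hle.trans (hκ.trans hκ_le))
    fun c hc => ?_
  rw [mk_out]
  exact mul_le_of_le h2κ_inf (two_power_power_le hκ_inf ((hc.le.trans hle).trans hκ))
    (((hbound c hc).trans hκ).trans hκ_le)

/-- For a `λ`-accessible set functor `H` (every element of `H X` is reachable from a
set of cardinality `< λ`) and an infinite bound `λ₀ ≥ λ` on `|H n|` for all `n < λ`,
every cardinal `2 ^ κ` with `κ ≥ λ₀` satisfies `|H (2 ^ κ)| ≤ 2 ^ κ`. -/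
theorem accessible_fixpoints_of_powers (H : SetFunctor)
    (lam : Cardinal) (hreg : lam.IsRegular)
    (hacc : ∀ (X : Type) (x : H.obj X), ∃ c : Cardinal, c < lam ∧
      ∃ f : c.out → X, x ∈ Set.range (H.map f))
    (lam0 : Cardinal) (hle : lam ≤ lam0) (hinf : Cardinal.aleph0 ≤ lam0)
    (hbound : ∀ c : Cardinal, c < lam → Cardinal.mk (H.obj c.out) ≤ lam0)
    (κ : Cardinal) (hκ : lam0 ≤ κ) :
    Cardinal.mk (H.obj ((2 : Cardinal) ^ κ).out) ≤ (2 : Cardinal) ^ κ :=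
  accessible_fixpoints_of_powers_general H lam hacc lam0 hle hinf hbound κ hκ
end
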